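/- Every palindromic automorphism α of A_Γ can be expressed as α = δγ, where δ is a diagram automorphism of A_Γ and γ ∈ ΠPA_Γ is a pure palindromic automorphism. -/

import Mathlib

namespace RaagPal

/-- The commutator relators defining the right-angled Artin group on a graph. -/
def raagRels {V : Type*} (G : SimpleGraph V) : Set (FreeGroup V) :=
  {r | ∃ i j : V, G.Adj i j ∧
    r = FreeGroup.of i * FreeGroup.of j * (FreeGroup.of i)⁻¹ * (FreeGroup.of j)⁻¹}

/-- The right-angled Artin group `A_Γ`. -/
abbrev RAAG {V : Type*} (G : SimpleGraph V) := PresentedGroup (raagRels G)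

/-- The generator of `A_Γ` corresponding to a vertex. -/
def gen {V : Type*} (G : SimpleGraph V) (i : V) : RAAG G := PresentedGroup.of i

/-- The element of `A_Γ` given by a single letter `v^{±1}`. -/
def letter {V : Type*} (G : SimpleGraph V) (p : V × Bool) : RAAG G :=
  if p.2 then gen G p.1 else (gen G p.1)⁻¹

/-- The element of `A_Γ` represented by a word on `V^{±1}`. -/
def wordProd {V : Type*} (G : SimpleGraph V) (L : List (V × Bool)) : RAAG G :=
  (L.map (letter G)).prod

/-- An element of `A_Γ` is a palindrome if it is represented by a word equal to its reverse. -/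
def IsPalindrome {V : Type*} (G : SimpleGraph V) (w : RAAG G) : Prop :=
  ∃ L : List (V × Bool), L.reverse = L ∧ wordProd G L = w

/-- A palindromic automorphism of `A_Γ`. -/
def IsPalAut {V : Type*} (G : SimpleGraph V) (α : MulAut (RAAG G)) : Prop :=
  ∀ i : V, IsPalindrome G (α (gen G i))

/-- A pure palindromic automorphism: each `α(v)` is a palindrome with middle letter `v^{±1}`. -/
def IsPurePalAut {V : Type*} (G : SimpleGraph V) (α : MulAut (RAAG G)) : Prop :=
  ∀ i : V, ∃ (L : List (V × Bool)) (b : Bool),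
    α (gen G i) = wordProd G (L ++ (i, b) :: L.reverse)

/-- `Dom G u v` means `u ≤ v`, i.e. `lk(u) ⊆ st(v)` : `v` dominates `u`. -/
def Dom {V : Type*} (G : SimpleGraph V) (u v : V) : Prop :=
  ∀ k : V, G.Adj k u → k = v ∨ G.Adj k v

/-- A diagram automorphism of `A_Γ`, induced by a graph automorphism of `Γ`. -/
def IsDiagramAut {V : Type*} (G : SimpleGraph V) (α : MulAut (RAAG G)) : Prop :=
  ∃ φ : G ≃g G, ∀ i : V, α (gen G i) = gen G (φ i)

/-- An inversion `ι_j` of `A_Γ`. -/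
def IsInversion {V : Type*} (G : SimpleGraph V) (α : MulAut (RAAG G)) : Prop :=
  ∃ j : V, α (gen G j) = (gen G j)⁻¹ ∧ ∀ k ≠ j, α (gen G k) = gen G k

/-- The dominated elementary palindromic automorphism `P_ij : v_i ↦ v_j v_i v_j`. -/
def IsPij {V : Type*} (G : SimpleGraph V) (i j : V) (α : MulAut (RAAG G)) : Prop :=
  i ≠ j ∧ Dom G i j ∧ α (gen G i) = gen G j * gen G i * gen G j ∧
    ∀ k ≠ i, α (gen G k) = gen G k

/-- A (well-defined) dominated elementary palindromic automorphism. -/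
def IsElemPal {V : Type*} (G : SimpleGraph V) (α : MulAut (RAAG G)) : Prop :=
  ∃ i j : V, IsPij G i j α

/-- An adjacent dominated transvection `τ_ij : v_i ↦ v_i v_j` with `v_i, v_j` adjacent. -/
def IsAdjTransvection {V : Type*} (G : SimpleGraph V) (α : MulAut (RAAG G)) : Prop :=
  ∃ i j : V, i ≠ j ∧ Dom G i j ∧ G.Adj i j ∧ α (gen G i) = gen G i * gen G j ∧
    ∀ k ≠ i, α (gen G k) = gen G k

/-- The exponent-sum homomorphism `A_Γ → ℤ` of the vertex `u`. -/
def expSum {V : Type*} [DecidableEq V] (G : SimpleGraph V) (u : V) :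
    RAAG G →* Multiplicative ℤ :=
  PresentedGroup.toGroup
    (f := fun i => Multiplicative.ofAdd (if i = u then (1 : ℤ) else 0))
    (by
      rintro r ⟨i, j, -, rfl⟩
      simp only [map_mul, map_inv, FreeGroup.lift_apply_of]
      rw [mul_comm (Multiplicative.ofAdd (if i = u then (1:ℤ) else 0))]
      group)

/-- The abelianisation vector of exponent sums of `w ∈ A_Γ`. -/
def abVec {n : ℕ} (G : SimpleGraph (Fin n)) (w : RAAG G) : Fin n → ℤ :=
  fun i => Multiplicative.toAdd (expSum G i w)

/-- The mod 2 abelianisation vector of `w ∈ A_Γ`. -/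
def mod2Vec {n : ℕ} (G : SimpleGraph (Fin n)) (w : RAAG G) : Fin n → ZMod 2 :=
  fun i => (abVec G w i : ZMod 2)

end RaagPal

/-! The mod-2 abelianisation of an automorphism is invertible and kills even palindromes, so each
`α(v_i)` is an odd palindrome; its middle letter `v_{σ(i)}^{±1}` is its mod-2 image, and `σ` is
injective. If `v_i, v_j` commute, so do `α(v_i), α(v_j)`; were `v_{σ(i)}, v_{σ(j)}` not adjacent,
sending them to the two standard generators of the mod-2 Heisenberg group would separate the
images of `α(v_i), α(v_j)` by a nontrivial commutator. So `σ` preserves adjacency and, `Γ` being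
finite, is a graph automorphism `φ`; then `γ = φ_*⁻¹ α` fixes the middle letter of each
`α(v_i)`. -/

open Function
open scoped commutatorElement

theorem List.exists_eq_append_reverse_of_reverse_eq {β : Type*} {L : List β}
    (h : L.reverse = L) :
    (∃ P : List β, L = P ++ P.reverse) ∨ ∃ (P : List β) (x : β), L = P ++ x :: P.reverse := by
  have hL := List.Palindrome.of_reverse_eq h
  clear h
  induction hL with
  | nil => exact Or.inl ⟨[], rfl⟩
  | singleton x => exact Or.inr ⟨[], x, rfl⟩
  | cons_concat x _ ih =>
    rcases ih with ⟨P, rfl⟩ | ⟨P, y, rfl⟩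
    · exact Or.inl ⟨x :: P, by simp⟩
    · exact Or.inr ⟨x :: P, y, by simp⟩

namespace SimpleGraph

variable {V : Type*} {G : SimpleGraph V}

theorem Hom.map_adj_iff_of_injective [Finite V] (f : G →g G) (hf : Injective f) {a b : V} :
    G.Adj (f a) (f b) ↔ G.Adj a b := by
  refine ⟨fun h => ?_, f.map_adj⟩
  let edges : Set (V × V) := {p | G.Adj p.1 p.2}
  have hmaps : Set.MapsTo (Prod.map f f) edges edges := fun _ hp => f.map_adj hp
  have hinj : Set.InjOn (Prod.map f f) edges := (hf.prodMap hf).injOn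
  have hbij := (Set.toFinite edges).injOn_iff_bijOn_of_mapsTo hmaps |>.mp hinj
  obtain ⟨⟨c, d⟩, hcd, hfcd⟩ := hbij.surjOn (show (f a, f b) ∈ edges from h)
  obtain ⟨rfl, rfl⟩ : c = a ∧ d = b :=
    ⟨hf (congrArg Prod.fst hfcd), hf (congrArg Prod.snd hfcd)⟩
  exact hcd

theorem Hom.exists_iso_of_injective [Finite V] (f : G →g G) (hf : Injective f) :
    ∃ φ : G ≃g G, ∀ v, φ v = f v :=
  ⟨⟨Equiv.ofBijective f (Finite.injective_iff_bijective.mp hf), f.map_adj_iff_of_injective hf⟩,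
    fun _ => rfl⟩

end SimpleGraph

/-- The Heisenberg group over `R`: `⟨a, b, c⟩` is the matrix `[[1, a, c], [0, 1, b], [0, 0, 1]]`. -/
@[ext]
structure Heisenberg (R : Type*) where
  a : R
  b : R
  c : R

namespace Heisenberg

variable {R : Type*} [CommRing R]

instance : Mul (Heisenberg R) := ⟨fun x y => ⟨x.a + y.a, x.b + y.b, x.c + y.c + x.a * y.b⟩⟩
instance : One (Heisenberg R) := ⟨⟨0, 0, 0⟩⟩
instance : Inv (Heisenberg R) := ⟨fun x => ⟨-x.a, -x.b, -x.c + x.a * x.b⟩⟩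

@[simp] theorem mul_a (x y : Heisenberg R) : (x * y).a = x.a + y.a := rfl
@[simp] theorem mul_b (x y : Heisenberg R) : (x * y).b = x.b + y.b := rfl
@[simp] theorem mul_c (x y : Heisenberg R) : (x * y).c = x.c + y.c + x.a * y.b := rfl
@[simp] theorem one_a : (1 : Heisenberg R).a = 0 := rfl
@[simp] theorem one_b : (1 : Heisenberg R).b = 0 := rfl
@[simp] theorem one_c : (1 : Heisenberg R).c = 0 := rfl
@[simp] theorem inv_a (x : Heisenberg R) : x⁻¹.a = -x.a := rfl
@[simp] theorem inv_b (x : Heisenberg R) : x⁻¹.b = -x.b := rfl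
@[simp] theorem inv_c (x : Heisenberg R) : x⁻¹.c = -x.c + x.a * x.b := rfl

instance : Group (Heisenberg R) where
  mul_assoc x y z := by ext <;> simp only [mul_a, mul_b, mul_c] <;> ring
  one_mul x := by ext <;> simp
  mul_one x := by ext <;> simp
  inv_mul_cancel x := by ext <;> simp

theorem commute_iff {x y : Heisenberg R} : Commute x y ↔ x.a * y.b = y.a * x.b := by
  refine ⟨fun h => ?_, fun h => ?_⟩
  · have hc := congrArg Heisenberg.c h.eq
    simp only [mul_c] at hc
    linear_combination hc
  · ext
    · exact add_comm _ _
    · exact add_comm _ _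
    · simp only [mul_c]
      linear_combination h

def aHom : Heisenberg R →* Multiplicative R where
  toFun x := Multiplicative.ofAdd x.a
  map_one' := rfl
  map_mul' _ _ := rfl

def bHom : Heisenberg R →* Multiplicative R where
  toFun x := Multiplicative.ofAdd x.b
  map_one' := rfl
  map_mul' _ _ := rfl

end Heisenberg

namespace RaagPal

section Universal

variable {V W H : Type*} {G : SimpleGraph V} {G' : SimpleGraph W} [Group H]

theorem gen_commute {i j : V} (h : G.Adj i j) : Commute (gen G i) (gen G j) := by
  have hrel := PresentedGroup.one_of_mem (show ⁅FreeGroup.of i, FreeGroup.of j⁆ ∈ raagRels G from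
    ⟨i, j, h, rfl⟩)
  rwa [map_commutatorElement, commutatorElement_eq_one_iff_commute] at hrel

theorem raag_hom_ext {φ ψ : RAAG G →* H} (h : ∀ i, φ (gen G i) = ψ (gen G i)) : φ = ψ :=
  PresentedGroup.ext h

def raagLift (f : V → H) (hf : ∀ i j, G.Adj i j → Commute (f i) (f j)) : RAAG G →* H :=
  PresentedGroup.toGroup (f := f) <| by
    rintro r ⟨i, j, hij, rfl⟩
    change FreeGroup.lift f ⁅FreeGroup.of i, FreeGroup.of j⁆ = 1
    rw [map_commutatorElement, FreeGroup.lift_apply_of, FreeGroup.lift_apply_of]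
    exact commutatorElement_eq_one_iff_commute.mpr (hf i j hij)

@[simp] theorem raagLift_gen (f : V → H) (hf : ∀ i j, G.Adj i j → Commute (f i) (f j)) (i : V) :
    raagLift f hf (gen G i) = f i :=
  PresentedGroup.toGroup.of (f := f) _

def raagMap (f : G →g G') : RAAG G →* RAAG G' :=
  raagLift (fun i => gen G' (f i)) fun _ _ h => gen_commute (f.map_adj h)

@[simp] theorem raagMap_gen (f : G →g G') (i : V) : raagMap f (gen G i) = gen G' (f i) :=
  raagLift_gen _ _ i

theorem raagMap_wordProd (f : G →g G') (L : List (V × Bool)) :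
    raagMap f (wordProd G L) = wordProd G' (L.map (Prod.map f id)) := by
  induction L with
  | nil => simp [wordProd]
  | cons p L ih =>
    obtain ⟨i, _ | _⟩ := p <;> simp_all [wordProd, letter]

def raagCongr (φ : G ≃g G') : RAAG G ≃* RAAG G' :=
  (raagMap φ.toHom).toMulEquiv (raagMap φ.symm.toHom) (raag_hom_ext fun i => by simp)
    (raag_hom_ext fun i => by simp)

@[simp] theorem raagCongr_gen (φ : G ≃g G') (i : V) : raagCongr φ (gen G i) = gen G' (φ i) :=
  raagMap_gen φ.toHom i

theorem raagCongr_symm_apply (φ : G ≃g G') (w : RAAG G') :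
    (raagCongr φ).symm w = raagMap φ.symm.toHom w :=
  rfl

theorem isPurePalAut_inv_mul {α : MulAut (RAAG G)} (φ : G ≃g G)
    (h : ∀ i, ∃ (L : List (V × Bool)) (b : Bool),
      α (gen G i) = wordProd G (L ++ (φ i, b) :: L.reverse)) :
    IsPurePalAut G ((raagCongr φ)⁻¹ * α) := by
  intro i
  obtain ⟨L, b, hL⟩ := h i
  refine ⟨L.map (Prod.map φ.symm id), b, ?_⟩
  rw [MulAut.mul_apply, MulAut.inv_apply, raagCongr_symm_apply, hL, raagMap_wordProd]
  simp

end Universal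

section Mod2

variable {n : ℕ} {G : SimpleGraph (Fin n)}

theorem mod2Vec_mul (w w' : RAAG G) : mod2Vec G (w * w') = mod2Vec G w + mod2Vec G w' := by
  funext u
  simp [mod2Vec, abVec]

variable (G) in
def mod2Hom : RAAG G →* Multiplicative (Fin n → ZMod 2) :=
  MonoidHom.mk' (fun w => Multiplicative.ofAdd (mod2Vec G w)) fun w w' => mod2Vec_mul w w'

theorem toAdd_mod2Hom (w : RAAG G) : Multiplicative.toAdd (mod2Hom G w) = mod2Vec G w := rfl

theorem mod2Vec_one : mod2Vec G (1 : RAAG G) = 0 :=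
  congrArg Multiplicative.toAdd (map_one (mod2Hom G))

theorem mod2Vec_inv (w : RAAG G) : mod2Vec G w⁻¹ = mod2Vec G w := by
  rw [← toAdd_mod2Hom, map_inv, toAdd_inv, toAdd_mod2Hom, ZModModule.neg_eq_self]

theorem mod2Vec_gen (i : Fin n) : mod2Vec G (gen G i) = Pi.single i 1 := by
  funext u
  simp [mod2Vec, abVec, gen, expSum, Pi.single_apply, eq_comm]

theorem mod2Vec_wordProd (L : List (Fin n × Bool)) :
    mod2Vec G (wordProd G L) = (L.map fun p => Pi.single p.1 1).sum := by
  induction L with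
  | nil => exact mod2Vec_one
  | cons p L ih =>
    obtain ⟨i, _ | _⟩ := p <;>
      simp [wordProd, letter, mod2Vec_mul, mod2Vec_inv, mod2Vec_gen, ← ih]

theorem mod2Vec_wordProd_append_reverse (P : List (Fin n × Bool)) :
    mod2Vec G (wordProd G (P ++ P.reverse)) = 0 := by
  simp [mod2Vec_wordProd, ZModModule.add_self]

theorem mod2Vec_wordProd_append_cons_reverse (P : List (Fin n × Bool)) (x : Fin n × Bool) :
    mod2Vec G (wordProd G (P ++ x :: P.reverse)) = Pi.single x.1 1 := by
  simp [mod2Vec_wordProd, add_left_comm _ (Pi.single x.1 1), ZModModule.add_self]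

theorem mod2Vec_map (F : RAAG G →* RAAG G) (w : RAAG G) :
    mod2Vec G (F w) =
      Fintype.linearCombination (ZMod 2) (fun k => mod2Vec G (F (gen G k))) (mod2Vec G w) := by
  have hF : (mod2Hom G).comp F =
      (AddMonoidHom.toMultiplicative
        (Fintype.linearCombination (ZMod 2) fun k => mod2Vec G (F (gen G k))).toAddMonoidHom).comp
        (mod2Hom G) :=
    raag_hom_ext fun i => by
      change (Multiplicative.ofAdd (mod2Vec G (F (gen G i))) : Multiplicative (Fin n → ZMod 2)) =
        Multiplicative.ofAdd (Fintype.linearCombination (ZMod 2)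
          (fun k => mod2Vec G (F (gen G k))) (mod2Vec G (gen G i)))
      rw [mod2Vec_gen, Fintype.linearCombination_apply_single, one_smul]
  exact congrArg Multiplicative.toAdd (DFunLike.congr_fun hF w)

theorem mod2Vec_map_eq_of_mod2Vec_eq (F : RAAG G →* RAAG G) {w w' : RAAG G}
    (h : mod2Vec G w = mod2Vec G w') : mod2Vec G (F w) = mod2Vec G (F w') := by
  rw [mod2Vec_map, mod2Vec_map F w', h]

theorem mod2Vec_apply_eq_iff (α : MulAut (RAAG G)) {w w' : RAAG G} :
    mod2Vec G (α w) = mod2Vec G (α w') ↔ mod2Vec G w = mod2Vec G w' := by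
  refine ⟨fun h => ?_, mod2Vec_map_eq_of_mod2Vec_eq α.toMonoidHom⟩
  simpa using mod2Vec_map_eq_of_mod2Vec_eq α.symm.toMonoidHom h

variable (G) in
/-- `v_k ↦ ⟨[k = u], [k = v], 0⟩`: only an edge `{u, v}` could map to a non-commuting pair. -/
def heisenbergHom (u v : Fin n) (huv : ¬G.Adj u v) : RAAG G →* Heisenberg (ZMod 2) :=
  raagLift (fun k => ⟨mod2Vec G (gen G k) u, mod2Vec G (gen G k) v, 0⟩) fun k l hkl => by
    rw [Heisenberg.commute_iff]
    simp only [mod2Vec_gen, Pi.single_apply]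
    split_ifs <;> simp_all [G.adj_comm]

theorem heisenbergHom_a {u v : Fin n} (huv : ¬G.Adj u v) (w : RAAG G) :
    (heisenbergHom G u v huv w).a = mod2Vec G w u := by
  have h : Heisenberg.aHom.comp (heisenbergHom G u v huv) =
      (AddMonoidHom.toMultiplicative (Pi.evalAddMonoidHom (fun _ => ZMod 2) u)).comp (mod2Hom G) :=
    raag_hom_ext fun k => by simp [heisenbergHom, Heisenberg.aHom]; rfl
  exact congrArg Multiplicative.toAdd (DFunLike.congr_fun h w)

theorem heisenbergHom_b {u v : Fin n} (huv : ¬G.Adj u v) (w : RAAG G) :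
    (heisenbergHom G u v huv w).b = mod2Vec G w v := by
  have h : Heisenberg.bHom.comp (heisenbergHom G u v huv) =
      (AddMonoidHom.toMultiplicative (Pi.evalAddMonoidHom (fun _ => ZMod 2) v)).comp (mod2Hom G) :=
    raag_hom_ext fun k => by simp [heisenbergHom, Heisenberg.bHom]; rfl
  exact congrArg Multiplicative.toAdd (DFunLike.congr_fun h w)

theorem mod2Vec_mul_comm_of_commute {x y : RAAG G} (hxy : Commute x y) {u v : Fin n}
    (huv : ¬G.Adj u v) : mod2Vec G x u * mod2Vec G y v = mod2Vec G y u * mod2Vec G x v := by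
  simpa only [heisenbergHom_a, heisenbergHom_b] using
    Heisenberg.commute_iff.mp (hxy.map (heisenbergHom G u v huv))

theorem adj_of_commute {x y : RAAG G} (hxy : Commute x y) {u v : Fin n}
    (hx : mod2Vec G x = Pi.single u 1) (hy : mod2Vec G y = Pi.single v 1) (huv : u ≠ v) :
    G.Adj u v := by
  by_contra h
  simpa [hx, hy, huv] using mod2Vec_mul_comm_of_commute hxy h

theorem mod2Vec_apply_gen_ne_zero (α : MulAut (RAAG G)) (i : Fin n) :
    mod2Vec G (α (gen G i)) ≠ 0 := by
  rw [← mod2Vec_one, ← map_one α, Ne, mod2Vec_apply_eq_iff, mod2Vec_gen, mod2Vec_one]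
  exact Pi.single_ne_zero_iff.mpr one_ne_zero

theorem injective_of_mod2Vec_apply_gen_eq_single {α : MulAut (RAAG G)} {σ : Fin n → Fin n}
    (hσ : ∀ i, mod2Vec G (α (gen G i)) = Pi.single (σ i) 1) : Injective σ := fun i j hij => by
  have h := (mod2Vec_apply_eq_iff α).mp ((hσ i).trans (hij ▸ (hσ j).symm))
  simpa [mod2Vec_gen, Pi.single_apply, eq_comm] using congrFun h j

theorem exists_iso_of_mod2Vec_apply_gen_eq_single {α : MulAut (RAAG G)} {σ : Fin n → Fin n}
    (hσ : ∀ i, mod2Vec G (α (gen G i)) = Pi.single (σ i) 1) : ∃ φ : G ≃g G, ∀ i, φ i = σ i :=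
  SimpleGraph.Hom.exists_iso_of_injective
    ⟨σ, fun {i j} hij => adj_of_commute ((gen_commute hij).map α) (hσ i) (hσ j)
      ((injective_of_mod2Vec_apply_gen_eq_single hσ).ne hij.ne)⟩
    (injective_of_mod2Vec_apply_gen_eq_single hσ)

theorem exists_eq_wordProd_append_cons_reverse {α : MulAut (RAAG G)} (hα : IsPalAut G α)
    (i : Fin n) : ∃ (P : List (Fin n × Bool)) (x : Fin n × Bool),
      α (gen G i) = wordProd G (P ++ x :: P.reverse) := by
  obtain ⟨L, hrev, hL⟩ := hα i
  rcases List.exists_eq_append_reverse_of_reverse_eq hrev with ⟨P, rfl⟩ | ⟨P, x, rfl⟩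
  · exact absurd (hL ▸ mod2Vec_wordProd_append_reverse P) (mod2Vec_apply_gen_ne_zero α i)
  · exact ⟨P, x, hL.symm⟩

end Mod2

end RaagPal

open RaagPal in
/-- every palindromic automorphism `α` of `A_Γ` factors as `α = δ γ` with
`δ` a diagram automorphism and `γ` a pure palindromic automorphism. -/
theorem palAut_eq_diagram_mul_pure (n : ℕ) (G : SimpleGraph (Fin n))
    (α : MulAut (RAAG G)) (hα : IsPalAut G α) :
    ∃ δ γ : MulAut (RAAG G), IsDiagramAut G δ ∧ IsPurePalAut G γ ∧ α = δ * γ := by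
  choose P x hPX using exists_eq_wordProd_append_cons_reverse hα
  obtain ⟨φ, hφ⟩ := exists_iso_of_mod2Vec_apply_gen_eq_single (σ := fun i => (x i).1) fun i => by
    rw [hPX, mod2Vec_wordProd_append_cons_reverse]
  refine ⟨raagCongr φ, (raagCongr φ)⁻¹ * α, ⟨φ, raagCongr_gen φ⟩,
    isPurePalAut_inv_mul φ fun i => ⟨P i, (x i).2, by rw [hPX, hφ]⟩,
    (mul_inv_cancel_left _ _).symm⟩
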